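/- arXiv:2507.11422 — 3 statements merged into one kernel-verified Lean document; each statement's English description precedes it below -/
import Mathlib

section
/- Let H be a separable Hilbert space and {L_k}_{k∈ℕ} a family of operators. Then there exists a countable collection {V_n}_{n∈ℕ} of mutually orthogonal, finite-dimensional subspaces, each invariant under all the L_k and containing no proper non-trivial subspace invariant under all the L_k, such that the smallest closed subspace H_inv containing all finite-dimensional subspaces invariant under all the L_k equals the closure of the direct sum ⊕_n V_n. -/
open scoped InnerProductSpace

/-- A subspace `V` is invariant for the family of (unbounded) operators `L k` if it is
contained in each domain and mapped into itself by each `L k`. -/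
def InvariantAll {H : Type*} [NormedAddCommGroup H] [InnerProductSpace ℂ H]
    (L : ℕ → H →ₗ.[ℂ] H) (V : Submodule ℂ H) : Prop :=
  ∀ k, ∃ h : ∀ x ∈ V, x ∈ (L k).domain, ∀ x (hx : x ∈ V), (L k) ⟨x, h x hx⟩ ∈ V

/-!
Symmetry of the `L k` makes `Uᗮ ⊓ V` invariant whenever `U` and `V` are, so a finite-dimensional
invariant subspace splits orthogonally into minimal invariant ones: split off an invariant
subspace of least positive dimension and recurse on its orthogonal complement. By separability,
the span of all finite-dimensional invariant subspaces has a dense sequence; each of its points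
lies in one such subspace, and the partial sums of these give an increasing chain `W n` of
finite-dimensional invariant subspaces with dense union. The orthogonal differences
`(W n)ᗮ ⊓ W (n + 1)` are invariant and mutually orthogonal; splitting each of them into minimal
pieces and enumerating all pieces by `ℕ × ℕ ≃ ℕ` gives the family.
-/

open Submodule Module

theorem exists_monotone_seq_sSup_subset_closure_iSup {R E : Type*} [Semiring R] [AddCommMonoid E]
    [Module R E] [TopologicalSpace E] [TopologicalSpace.PseudoMetrizableSpace E]
    [TopologicalSpace.SeparableSpace E] {S : Set (Submodule R E)} (hS : SupClosed S)
    (hbot : ⊥ ∈ S) :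
    ∃ W : ℕ → Submodule R E, Monotone W ∧ W 0 = ⊥ ∧ (∀ n, W n ∈ S) ∧
      ((sSup S : Submodule R E) : Set E) ⊆ closure (⨆ n, W n : Submodule R E) := by
  set T := sSup S
  have : TopologicalSpace.SeparableSpace (T : Set E) :=
    (TopologicalSpace.IsSeparable.of_separableSpace _).separableSpace
  have : Nonempty (T : Set E) := ⟨⟨0, T.zero_mem⟩⟩
  let u := TopologicalSpace.denseSeq (T : Set E)
  choose U hUS huU using fun n => (mem_sSup_of_directed ⟨⊥, hbot⟩ hS.directedOn).1 (u n).2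
  refine ⟨fun n => (Finset.range n).sup U, fun m n hmn => Finset.sup_mono (Finset.range_mono hmn),
    by simp, fun n => Finset.sup_induction hbot (fun _ hA _ hB => hS hA hB) fun i _ => hUS i, ?_⟩
  refine (Subtype.dense_iff.1 (TopologicalSpace.denseRange_denseSeq _)).trans (closure_mono ?_)
  rintro _ ⟨_, ⟨n, rfl⟩, rfl⟩
  exact le_iSup (fun n => (Finset.range n).sup U) (n + 1)
    (Finset.le_sup (f := U) (Finset.self_mem_range_succ n) (huU n))

section OrthogonalDifferences

variable {𝕜 E : Type*} [RCLike 𝕜] [NormedAddCommGroup E] [InnerProductSpace 𝕜 E]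

theorem pairwise_isOrtho_orthogonal_inf_succ {W : ℕ → Submodule 𝕜 E} (hW : Monotone W) :
    Pairwise (fun m n => (W m)ᗮ ⊓ W (m + 1) ⟂ (W n)ᗮ ⊓ W (n + 1)) := by
  have of_lt : ∀ m n, m < n → (W m)ᗮ ⊓ W (m + 1) ⟂ (W n)ᗮ ⊓ W (n + 1) := fun m n hmn =>
    (isOrtho_orthogonal_right (W n)).mono (inf_le_right.trans (hW hmn)) inf_le_left
  intro m n hmn
  rcases hmn.lt_or_gt with h | h
  exacts [of_lt m n h, (of_lt n m h).symm]

theorem iSup_orthogonal_inf_succ {W : ℕ → Submodule 𝕜 E} (hW : Monotone W) (hW₀ : W 0 = ⊥)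
    [∀ n, (W n).HasOrthogonalProjection] : ⨆ n, (W n)ᗮ ⊓ W (n + 1) = ⨆ n, W n := by
  refine le_antisymm (iSup_le fun n => inf_le_right.trans (le_iSup W (n + 1)))
    (iSup_le fun n => ?_)
  induction n with
  | zero => exact hW₀ ▸ bot_le
  | succ n ih =>
    rw [← sup_orthogonal_inf_of_hasOrthogonalProjection (hW n.le_succ)]
    exact sup_le ih (le_iSup (fun n => (W n)ᗮ ⊓ W (n + 1)) n)

theorem pairwise_isOrtho_uncurry {ι κ : Type*} {D : ι → Submodule 𝕜 E}
    {g : ι → κ → Submodule 𝕜 E} (hD : Pairwise (fun i j => D i ⟂ D j))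
    (hg : ∀ i, Pairwise (fun k l => g i k ⟂ g i l)) (hgD : ∀ i k, g i k ≤ D i) :
    Pairwise (fun p q : ι × κ => g p.1 p.2 ⟂ g q.1 q.2) := by
  rintro ⟨i, k⟩ ⟨j, l⟩ hne
  by_cases hij : i = j
  · subst hij
    exact hg i fun hkl => hne (congrArg _ hkl)
  · exact (hD hij).mono (hgD i k) (hgD j l)

end OrthogonalDifferences

section Invariant

variable {H : Type*} [NormedAddCommGroup H] [InnerProductSpace ℂ H] {L : ℕ → H →ₗ.[ℂ] H}

namespace InvariantAll

theorem bot : InvariantAll L ⊥ := fun k =>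
  ⟨fun x hx => (mem_bot ℂ).1 hx ▸ (L k).domain.zero_mem, fun x hx => by
    obtain rfl := (mem_bot ℂ).1 hx
    exact (mem_bot ℂ).2 (L k).map_zero⟩

theorem sup {V W : Submodule ℂ H} (hV : InvariantAll L V) (hW : InvariantAll L W) :
    InvariantAll L (V ⊔ W) := by
  intro k
  obtain ⟨hVdom, hVmap⟩ := hV k
  obtain ⟨hWdom, hWmap⟩ := hW k
  have hdom : ∀ x ∈ V ⊔ W, x ∈ (L k).domain := fun x hx =>
    sup_le (show V ≤ (L k).domain from hVdom) (show W ≤ (L k).domain from hWdom) hx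
  refine ⟨hdom, fun x hx => ?_⟩
  obtain ⟨v, hv, w, hw, rfl⟩ := mem_sup.1 hx
  have hsplit : (⟨v + w, hdom _ hx⟩ : (L k).domain) = ⟨v, hVdom v hv⟩ + ⟨w, hWdom w hw⟩ := rfl
  rw [hsplit, (L k).map_add]
  exact add_mem_sup (hVmap v hv) (hWmap w hw)

theorem orthogonal_inf (hsym : ∀ k, (L k).IsFormalAdjoint (L k)) {U V : Submodule ℂ H}
    (hU : InvariantAll L U) (hV : InvariantAll L V) : InvariantAll L (Uᗮ ⊓ V) := by
  intro k
  obtain ⟨hUdom, hUmap⟩ := hU k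
  obtain ⟨hVdom, hVmap⟩ := hV k
  refine ⟨fun x hx => hVdom x (mem_inf.1 hx).2, fun x hx => ?_⟩
  obtain ⟨hxU, hxV⟩ := mem_inf.1 hx
  refine mem_inf.2 ⟨fun u hu => ?_, hVmap x hxV⟩
  calc ⟪u, (L k) ⟨x, hVdom x hxV⟩⟫_ℂ
      = ⟪(L k) ⟨u, hUdom u hu⟩, x⟫_ℂ := (hsym k ⟨u, hUdom u hu⟩ ⟨x, hVdom x hxV⟩).symm
    _ = 0 := hxU _ (hUmap u hu)

end InvariantAll

def IsMinimalInvariant (L : ℕ → H →ₗ.[ℂ] H) (V : Submodule ℂ H) : Prop :=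
  InvariantAll L V ∧ ∀ W ≤ V, InvariantAll L W → W = ⊥ ∨ W = V

theorem isMinimalInvariant_bot : IsMinimalInvariant L ⊥ :=
  ⟨InvariantAll.bot, fun _ hW _ => Or.inl (le_bot_iff.1 hW)⟩

theorem exists_isMinimalInvariant_le {V : Submodule ℂ H} [FiniteDimensional ℂ V]
    (hV : InvariantAll L V) (hV₀ : V ≠ ⊥) :
    ∃ M ≤ V, M ≠ ⊥ ∧ IsMinimalInvariant L M := by
  obtain ⟨M, ⟨hMV, hM₀, hM⟩, hmin⟩ := (measure fun M : Submodule ℂ H => finrank ℂ M).wf.has_min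
    {M | M ≤ V ∧ M ≠ ⊥ ∧ InvariantAll L M} ⟨V, le_rfl, hV₀, hV⟩
  have : FiniteDimensional ℂ M := finiteDimensional_of_le hMV
  refine ⟨M, hMV, hM₀, hM, fun W hWM hW => or_iff_not_imp_left.2 fun hW₀ => ?_⟩
  by_contra hWM'
  exact hmin W ⟨hWM.trans hMV, hW₀, hW⟩ (finrank_lt_finrank_of_lt (lt_of_le_of_ne hWM hWM'))

-- Families are indexed by `ℕ` and padded with `⊥`, which is trivially minimal.
theorem exists_orthogonal_minimal_decomposition (hsym : ∀ k, (L k).IsFormalAdjoint (L k))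
    (V : Submodule ℂ H) [FiniteDimensional ℂ V] (hV : InvariantAll L V) :
    ∃ f : ℕ → Submodule ℂ H, (∀ i, IsMinimalInvariant L (f i)) ∧
      Pairwise (fun i j => f i ⟂ f j) ∧ ⨆ i, f i = V := by
  induction hn : finrank ℂ V using Nat.strong_induction_on generalizing V with
  | _ n ih =>
  by_cases hV₀ : V = ⊥
  · exact ⟨fun _ => ⊥, fun _ => isMinimalInvariant_bot, fun _ _ _ => isOrtho_bot_left,
      by simp [hV₀]⟩
  obtain ⟨M, hMV, hM₀, hM⟩ := exists_isMinimalInvariant_le hV hV₀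
  have : FiniteDimensional ℂ M := finiteDimensional_of_le hMV
  have : FiniteDimensional ℂ ↥(Mᗮ ⊓ V) := finiteDimensional_of_le inf_le_right
  have hrank : finrank ℂ ↥(Mᗮ ⊓ V) < n := by
    have hM_pos : 0 < finrank ℂ M := Nat.pos_of_ne_zero fun h => hM₀ (finrank_eq_zero.1 h)
    have := finrank_add_inf_finrank_orthogonal hMV
    omega
  obtain ⟨g, hg, hg_orth, hg_sup⟩ := ih _ hrank (Mᗮ ⊓ V) (hM.1.orthogonal_inf hsym hV) rfl
  have hgM : ∀ j, g j ⟂ M := fun j =>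
    (isOrtho_orthogonal_left M).mono ((hg_sup ▸ le_iSup g j).trans inf_le_left) le_rfl
  refine ⟨fun | 0 => M | j + 1 => g j, ?_, ?_, ?_⟩
  · rintro (_ | j)
    exacts [hM, hg j]
  · rintro (_ | i) (_ | j) hij
    exacts [absurd rfl hij, (hgM j).symm, hgM i, hg_orth (ne_of_apply_ne (· + 1) hij)]
  · rw [← sup_iSup_nat_succ]
    exact hg_sup.symm ▸ sup_orthogonal_inf_of_hasOrthogonalProjection hMV

theorem exists_orthogonal_minimal_decomposition_iSup (hsym : ∀ k, (L k).IsFormalAdjoint (L k))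
    {W : ℕ → Submodule ℂ H} (hW : Monotone W) (hW₀ : W 0 = ⊥)
    [∀ n, FiniteDimensional ℂ (W n)] (hW_inv : ∀ n, InvariantAll L (W n)) :
    ∃ V : ℕ → Submodule ℂ H, (∀ n, FiniteDimensional ℂ (V n)) ∧
      (∀ n, IsMinimalInvariant L (V n)) ∧ Pairwise (fun m n => V m ⟂ V n) ∧
      ⨆ n, V n = ⨆ n, W n := by
  have : ∀ n, FiniteDimensional ℂ ↥((W n)ᗮ ⊓ W (n + 1)) := fun n =>
    finiteDimensional_of_le inf_le_right
  choose g hg_min hg_orth hg_sup using fun n => exists_orthogonal_minimal_decomposition hsym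
    ((W n)ᗮ ⊓ W (n + 1)) ((hW_inv n).orthogonal_inf hsym (hW_inv (n + 1)))
  have hgD : ∀ n i, g n i ≤ (W n)ᗮ ⊓ W (n + 1) := fun n i => hg_sup n ▸ le_iSup (g n) i
  let e : ℕ ≃ ℕ × ℕ := Nat.pairEquiv.symm
  refine ⟨fun m => g (e m).1 (e m).2,
    fun m => finiteDimensional_of_le ((hgD _ _).trans inf_le_right), fun m => hg_min _ _, ?_, ?_⟩
  · exact (pairwise_isOrtho_uncurry (pairwise_isOrtho_orthogonal_inf_succ hW) hg_orth
      hgD).comp_of_injective e.injective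
  · rw [e.iSup_comp (g := fun p => g p.1 p.2), iSup_prod, ← iSup_orthogonal_inf_succ hW hW₀]
    exact iSup_congr hg_sup

end Invariant

theorem stmt6_general {H : Type*} [NormedAddCommGroup H] [InnerProductSpace ℂ H]
    [TopologicalSpace.SeparableSpace H]
    (L : ℕ → H →ₗ.[ℂ] H)
    (hsym : ∀ k, ∀ x y : (L k).domain, ⟪(L k) x, (y : H)⟫_ℂ = ⟪(x : H), (L k) y⟫_ℂ) :
    ∃ V : ℕ → Submodule ℂ H,
      (∀ n, FiniteDimensional ℂ (V n)) ∧
      (∀ n, InvariantAll L (V n)) ∧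
      (∀ n m, n ≠ m → ∀ x ∈ V n, ∀ y ∈ V m, ⟪x, y⟫_ℂ = 0) ∧
      (∀ n, ∀ W : Submodule ℂ H, W ≤ V n → InvariantAll L W → W = ⊥ ∨ W = V n) ∧
      (sSup {W : Submodule ℂ H | FiniteDimensional ℂ W ∧ InvariantAll L W}).topologicalClosure
        = (⨆ n, V n).topologicalClosure := by
  set S := {W : Submodule ℂ H | FiniteDimensional ℂ W ∧ InvariantAll L W}
  have hS : SupClosed S := fun A ⟨hA_fd, hA⟩ B ⟨hB_fd, hB⟩ =>
    ⟨finiteDimensional_sup A B, hA.sup hB⟩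
  obtain ⟨W, hW_mono, hW₀, hWS, hW_dense⟩ :=
    exists_monotone_seq_sSup_subset_closure_iSup hS ⟨inferInstance, InvariantAll.bot⟩
  have : ∀ n, FiniteDimensional ℂ (W n) := fun n => (hWS n).1
  obtain ⟨V, hV_fd, hV_min, hV_orth, hV_sup⟩ :=
    exists_orthogonal_minimal_decomposition_iSup hsym hW_mono hW₀ fun n => (hWS n).2
  refine ⟨V, hV_fd, fun n => (hV_min n).1, fun n m hnm => isOrtho_iff_inner_eq.1 (hV_orth hnm),
    fun n => (hV_min n).2, ?_⟩
  rw [hV_sup]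
  exact le_antisymm (topologicalClosure_minimal _ hW_dense (isClosed_topologicalClosure _))
    (topologicalClosure_mono (iSup_le fun n => le_sSup (hWS n)))

/-- For a family `{L_k}` of symmetric densely defined operators on a separable
Hilbert space there is a countable collection `{V_n}` of mutually orthogonal finite-dimensional
subspaces, invariant for all `L_k` and minimal (no proper nontrivial invariant subspace), whose
direct sum has the same closure as the span of all finite-dimensional invariant subspaces. -/
theorem stmt6 {H : Type*} [NormedAddCommGroup H] [InnerProductSpace ℂ H] [CompleteSpace H]
    [TopologicalSpace.SeparableSpace H]
    (L : ℕ → H →ₗ.[ℂ] H)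
    (hdense : ∀ k, Dense ((L k).domain : Set H))
    (hsym : ∀ k, ∀ x y : (L k).domain, ⟪(L k) x, (y : H)⟫_ℂ = ⟪(x : H), (L k) y⟫_ℂ) :
    ∃ V : ℕ → Submodule ℂ H,
      (∀ n, FiniteDimensional ℂ (V n)) ∧
      (∀ n, InvariantAll L (V n)) ∧
      (∀ n m, n ≠ m → ∀ x ∈ V n, ∀ y ∈ V m, ⟪x, y⟫_ℂ = 0) ∧
      (∀ n, ∀ W : Submodule ℂ H, W ≤ V n → InvariantAll L W → W = ⊥ ∨ W = V n) ∧
      (sSup {W : Submodule ℂ H | FiniteDimensional ℂ W ∧ InvariantAll L W}).topologicalClosure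
        = (⨆ n, V n).topologicalClosure :=
  stmt6_general L hsym
end

section
/- Let u₁, u₂ : ℝ² → ℝ be smooth with u₁(x,y) = c₁ x^{n₁} + O(x^{n₁+1}) − c₂ y^{n₂} + O(y^{n₂+1}) and u₂(x,y) = c₃ x^{n₃} + O(x^{n₃+1}) − c₄ y^{n₄} + O(y^{n₄+1}) near the origin, where c₁c₄ ≠ 0 and n₂ > n₄, n₃ > n₁. Then there exists a neighbourhood of the origin and constants such that u₁(x,y)² + u₂(x,y)² ≥ (c₁²/2) x^{2n₁} + (c₄²/2) y^{2n₄} on that neighbourhood; in particular (0,0) is an isolated zero of u₁² + u₂². -/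
private lemma pow_abs_le_eps {x ε : ℝ} (hx : |x| < ε) (hε : ε ≤ 1) {m n : ℕ} (h : m < n) :
    |x| ^ n ≤ ε * |x| ^ m := by
  have hx0 : (0:ℝ) ≤ |x| := abs_nonneg x
  have hx1 : |x| ≤ 1 := le_trans hx.le hε
  have h1 : |x| ^ n ≤ |x| ^ (m + 1) := pow_le_pow_of_le_one hx0 hx1 h
  calc |x| ^ n ≤ |x| ^ (m + 1) := h1
    _ = |x| * |x| ^ m := by ring
    _ ≤ ε * |x| ^ m := mul_le_mul_of_nonneg_right hx.le (pow_nonneg hx0 m)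

private lemma quad_lb (a r : ℝ) : 3 / 4 * a ^ 2 - 3 * r ^ 2 ≤ (a + r) ^ 2 := by
  nlinarith [sq_nonneg (a + 4 * r)]

private lemma err_bound (A m P Q r₁ r₂ : ℝ) (hA : 0 ≤ A)
    (hr1 : r₁ ^ 2 ≤ A * (P + Q) ^ 2) (hr2 : r₂ ^ 2 ≤ A * (P + Q) ^ 2)
    (hAm : 48 * A ≤ m) (hPQ : 0 ≤ P ^ 2 + Q ^ 2) :
    3 * (r₁ ^ 2 + r₂ ^ 2) ≤ m / 4 * (P ^ 2 + Q ^ 2) := by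
  nlinarith [mul_nonneg hA (sq_nonneg (P - Q)),
    mul_nonneg (by linarith : (0:ℝ) ≤ m - 48 * A) hPQ]

private lemma final_comb (a b X Y m r₁ r₂ U V : ℝ)
    (key1 : 3 / 4 * a * X - 3 * r₁ ^ 2 ≤ U) (key2 : 3 / 4 * b * Y - 3 * r₂ ^ 2 ≤ V)
    (h3s : 3 * (r₁ ^ 2 + r₂ ^ 2) ≤ m / 4 * (X + Y)) (hma : m ≤ a) (hmb : m ≤ b)
    (hX : 0 ≤ X) (hY : 0 ≤ Y) : a / 2 * X + b / 2 * Y ≤ U + V := by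
  nlinarith [mul_nonneg (sub_nonneg.2 hma) hX, mul_nonneg (sub_nonneg.2 hmb) hY]

set_option maxHeartbeats 800000 in
/-- If `u₁(x,y) = c₁ x^{n₁} + O(x^{n₁+1}) − c₂ y^{n₂} + O(y^{n₂+1})` and
`u₂(x,y) = c₃ x^{n₃} + O(x^{n₃+1}) − c₄ y^{n₄} + O(y^{n₄+1})` are smooth with `c₁ c₄ ≠ 0`,
`n₂ > n₄`, `n₃ > n₁`, then near the origin
`u₁² + u₂² ≥ (c₁²/2) x^{2n₁} + (c₄²/2) y^{2n₄}`; in particular `(0,0)` is an isolated zero of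
`u₁² + u₂²`. -/
theorem stmt14 (n₁ n₂ n₃ n₄ : ℕ) (h1 : 1 ≤ n₁) (h2 : 1 ≤ n₂) (h3 : 1 ≤ n₃) (h4 : 1 ≤ n₄)
    (h24 : n₄ < n₂) (h13 : n₁ < n₃)
    (c₁ c₂ c₃ c₄ : ℝ) (hc1 : c₁ ≠ 0) (hc4 : c₄ ≠ 0)
    (u₁ u₂ : ℝ → ℝ → ℝ)
    (hsm1 : ContDiff ℝ (⊤ : ℕ∞) (fun p : ℝ × ℝ => u₁ p.1 p.2))
    (hsm2 : ContDiff ℝ (⊤ : ℕ∞) (fun p : ℝ × ℝ => u₂ p.1 p.2))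
    (hO1 : ∃ C δ : ℝ, 0 < δ ∧ ∀ x y : ℝ, |x| < δ → |y| < δ →
      |u₁ x y - (c₁ * x ^ n₁ - c₂ * y ^ n₂)| ≤ C * (|x| ^ (n₁ + 1) + |y| ^ (n₂ + 1)))
    (hO2 : ∃ C δ : ℝ, 0 < δ ∧ ∀ x y : ℝ, |x| < δ → |y| < δ →
      |u₂ x y - (c₃ * x ^ n₃ - c₄ * y ^ n₄)| ≤ C * (|x| ^ (n₃ + 1) + |y| ^ (n₄ + 1))) :
    ∃ ε : ℝ, 0 < ε ∧
      (∀ x y : ℝ, |x| < ε → |y| < ε →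
        c₁ ^ 2 / 2 * x ^ (2 * n₁) + c₄ ^ 2 / 2 * y ^ (2 * n₄)
          ≤ (u₁ x y) ^ 2 + (u₂ x y) ^ 2) ∧
      ∀ x y : ℝ, |x| < ε → |y| < ε → (x ≠ 0 ∨ y ≠ 0) →
        0 < (u₁ x y) ^ 2 + (u₂ x y) ^ 2 := by
  obtain ⟨C₁, δ₁, hδ₁, hb1⟩ := hO1
  obtain ⟨C₂, δ₂, hδ₂, hb2⟩ := hO2
  set D₁ : ℝ := max C₁ 0 with hD₁
  set D₂ : ℝ := max C₂ 0 with hD₂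
  have hD₁0 : 0 ≤ D₁ := le_max_right _ _
  have hD₂0 : 0 ≤ D₂ := le_max_right _ _
  set K : ℝ := D₁ + D₂ + |c₂| + |c₃| + 1 with hK
  have hK1 : (1:ℝ) ≤ K := by
    have := abs_nonneg c₂
    have := abs_nonneg c₃
    simp only [hK]; linarith
  have hK0 : (0:ℝ) < K := lt_of_lt_of_le one_pos hK1
  set m : ℝ := min (c₁ ^ 2) (c₄ ^ 2) with hm
  have hm0 : 0 < m := lt_min (by positivity) (by positivity)
  have hm1 : m ≤ c₁ ^ 2 := min_le_left _ _
  have hm2 : m ≤ c₄ ^ 2 := min_le_right _ _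
  set ε : ℝ := min (min δ₁ δ₂) (min 1 (m / (48 * K ^ 2))) with hε
  have hε0 : 0 < ε := by
    apply lt_min (lt_min hδ₁ hδ₂)
    exact lt_min one_pos (by positivity)
  have hε1 : ε ≤ 1 := le_trans (min_le_right _ _) (min_le_left _ _)
  have hεm : ε ≤ m / (48 * K ^ 2) := le_trans (min_le_right _ _) (min_le_right _ _)
  have hεδ₁ : ε ≤ δ₁ := le_trans (min_le_left _ _) (min_le_left _ _)
  have hεδ₂ : ε ≤ δ₂ := le_trans (min_le_left _ _) (min_le_right _ _)
  -- key pointwise estimate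
  have main : ∀ x y : ℝ, |x| < ε → |y| < ε →
      c₁ ^ 2 / 2 * x ^ (2 * n₁) + c₄ ^ 2 / 2 * y ^ (2 * n₄)
        ≤ (u₁ x y) ^ 2 + (u₂ x y) ^ 2 := by
    intro x y hx hy
    have hx0 : (0:ℝ) ≤ |x| := abs_nonneg x
    have hy0 : (0:ℝ) ≤ |y| := abs_nonneg y
    set P : ℝ := |x| ^ n₁ with hPdef
    set Q : ℝ := |y| ^ n₄ with hQdef
    have hP0 : 0 ≤ P := pow_nonneg hx0 _
    have hQ0 : 0 ≤ Q := pow_nonneg hy0 _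
    -- elementary power bounds
    have bx1 : |x| ^ (n₁ + 1) ≤ ε * P := pow_abs_le_eps hx hε1 (Nat.lt_succ_self n₁)
    have by1 : |y| ^ (n₂ + 1) ≤ ε * Q := pow_abs_le_eps hy hε1 (Nat.lt_succ_of_lt h24)
    have by2 : |y| ^ n₂ ≤ ε * Q := pow_abs_le_eps hy hε1 h24
    have bx2 : |x| ^ n₃ ≤ ε * P := pow_abs_le_eps hx hε1 h13
    have bx3 : |x| ^ (n₃ + 1) ≤ ε * P := pow_abs_le_eps hx hε1 (Nat.lt_succ_of_lt h13)
    have by3 : |y| ^ (n₄ + 1) ≤ ε * Q := pow_abs_le_eps hy hε1 (Nat.lt_succ_self n₄)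
    -- error bounds from hypotheses
    have e1 : |u₁ x y - (c₁ * x ^ n₁ - c₂ * y ^ n₂)| ≤ D₁ * (ε * P + ε * Q) := by
      have h := hb1 x y (lt_of_lt_of_le hx hεδ₁) (lt_of_lt_of_le hy hεδ₁)
      have hs : (0:ℝ) ≤ |x| ^ (n₁ + 1) + |y| ^ (n₂ + 1) := by positivity
      calc |u₁ x y - (c₁ * x ^ n₁ - c₂ * y ^ n₂)|
          ≤ C₁ * (|x| ^ (n₁ + 1) + |y| ^ (n₂ + 1)) := h
        _ ≤ D₁ * (|x| ^ (n₁ + 1) + |y| ^ (n₂ + 1)) :=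
            mul_le_mul_of_nonneg_right (le_max_left _ _) hs
        _ ≤ D₁ * (ε * P + ε * Q) := by
            apply mul_le_mul_of_nonneg_left _ hD₁0
            linarith
    have e2 : |u₂ x y - (c₃ * x ^ n₃ - c₄ * y ^ n₄)| ≤ D₂ * (ε * P + ε * Q) := by
      have h := hb2 x y (lt_of_lt_of_le hx hεδ₂) (lt_of_lt_of_le hy hεδ₂)
      have hs : (0:ℝ) ≤ |x| ^ (n₃ + 1) + |y| ^ (n₄ + 1) := by positivity
      calc |u₂ x y - (c₃ * x ^ n₃ - c₄ * y ^ n₄)|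
          ≤ C₂ * (|x| ^ (n₃ + 1) + |y| ^ (n₄ + 1)) := h
        _ ≤ D₂ * (|x| ^ (n₃ + 1) + |y| ^ (n₄ + 1)) :=
            mul_le_mul_of_nonneg_right (le_max_left _ _) hs
        _ ≤ D₂ * (ε * P + ε * Q) := by
            apply mul_le_mul_of_nonneg_left _ hD₂0
            linarith
    -- remainders
    set r₁ : ℝ := u₁ x y - c₁ * x ^ n₁ with hr₁def
    set r₂ : ℝ := u₂ x y - (- (c₄ * y ^ n₄)) with hr₂def
    have hr1 : |r₁| ≤ K * ε * (P + Q) := by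
      have hsplit : r₁ = (u₁ x y - (c₁ * x ^ n₁ - c₂ * y ^ n₂)) + (-(c₂ * y ^ n₂)) := by
        rw [hr₁def]; ring
      have habs : |r₁| ≤ |u₁ x y - (c₁ * x ^ n₁ - c₂ * y ^ n₂)| + |c₂ * y ^ n₂| := by
        rw [hsplit]
        exact (abs_add_le _ _).trans (by rw [abs_neg])
      have h2 : |c₂ * y ^ n₂| = |c₂| * |y| ^ n₂ := by
        rw [abs_mul, abs_pow]
      have h3 : |c₂| * |y| ^ n₂ ≤ |c₂| * (ε * Q) :=
        mul_le_mul_of_nonneg_left by2 (abs_nonneg c₂)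
      have hεP : 0 ≤ ε * P := mul_nonneg hε0.le hP0
      have hεQ : 0 ≤ ε * Q := mul_nonneg hε0.le hQ0
      have p1 : 0 ≤ (D₂ + |c₂| + |c₃| + 1) * (ε * P) :=
        mul_nonneg (by positivity) hεP
      have p2 : 0 ≤ (D₂ + |c₃| + 1) * (ε * Q) :=
        mul_nonneg (by positivity) hεQ
      have hKsplit : K * ε * (P + Q) =
          D₁ * (ε * P + ε * Q) + |c₂| * (ε * Q)
            + (D₂ + |c₂| + |c₃| + 1) * (ε * P) + (D₂ + |c₃| + 1) * (ε * Q) := by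
        rw [hK]; ring
      linarith only [e1, habs, h2, h3, p1, p2, hKsplit]
    have hr2 : |r₂| ≤ K * ε * (P + Q) := by
      have hsplit : r₂ = (u₂ x y - (c₃ * x ^ n₃ - c₄ * y ^ n₄)) + (c₃ * x ^ n₃) := by
        rw [hr₂def]; ring
      have habs : |r₂| ≤ |u₂ x y - (c₃ * x ^ n₃ - c₄ * y ^ n₄)| + |c₃ * x ^ n₃| := by
        rw [hsplit]; exact abs_add_le _ _
      have h2 : |c₃ * x ^ n₃| = |c₃| * |x| ^ n₃ := by rw [abs_mul, abs_pow]
      have h3 : |c₃| * |x| ^ n₃ ≤ |c₃| * (ε * P) :=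
        mul_le_mul_of_nonneg_left bx2 (abs_nonneg c₃)
      have hεP : 0 ≤ ε * P := mul_nonneg hε0.le hP0
      have hεQ : 0 ≤ ε * Q := mul_nonneg hε0.le hQ0
      have p1 : 0 ≤ (D₁ + |c₂| + 1) * (ε * P) :=
        mul_nonneg (by positivity) hεP
      have p2 : 0 ≤ (D₁ + |c₂| + |c₃| + 1) * (ε * Q) :=
        mul_nonneg (by positivity) hεQ
      have hKsplit : K * ε * (P + Q) =
          D₂ * (ε * P + ε * Q) + |c₃| * (ε * P)
            + (D₁ + |c₂| + 1) * (ε * P) + (D₁ + |c₂| + |c₃| + 1) * (ε * Q) := by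
        rw [hK]; ring
      linarith only [e2, habs, h2, h3, p1, p2, hKsplit]
    have hr1sq : r₁ ^ 2 ≤ (K * ε * (P + Q)) ^ 2 := by
      have := pow_le_pow_left₀ (abs_nonneg r₁) hr1 2
      rwa [sq_abs] at this
    have hr2sq : r₂ ^ 2 ≤ (K * ε * (P + Q)) ^ 2 := by
      have := pow_le_pow_left₀ (abs_nonneg r₂) hr2 2
      rwa [sq_abs] at this
    -- relate powers
    have hXP : x ^ (2 * n₁) = P ^ 2 := by
      calc x ^ (2 * n₁) = (x ^ n₁) ^ 2 := by rw [pow_mul']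
        _ = |x ^ n₁| ^ 2 := (sq_abs _).symm
        _ = (|x| ^ n₁) ^ 2 := by rw [abs_pow]
        _ = P ^ 2 := by rw [hPdef]
    have hYQ : y ^ (2 * n₄) = Q ^ 2 := by
      calc y ^ (2 * n₄) = (y ^ n₄) ^ 2 := by rw [pow_mul']
        _ = |y ^ n₄| ^ 2 := (sq_abs _).symm
        _ = (|y| ^ n₄) ^ 2 := by rw [abs_pow]
        _ = Q ^ 2 := by rw [hQdef]
    -- quadratic lower bounds
    have hu1 : u₁ x y = c₁ * x ^ n₁ + r₁ := by rw [hr₁def]; ring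
    have hu2 : u₂ x y = -(c₄ * y ^ n₄) + r₂ := by rw [hr₂def]; ring
    have key1 : 3 / 4 * c₁ ^ 2 * P ^ 2 - 3 * r₁ ^ 2 ≤ (u₁ x y) ^ 2 := by
      have hc : (c₁ * x ^ n₁) ^ 2 = c₁ ^ 2 * P ^ 2 := by rw [← hXP]; ring
      have h := quad_lb (c₁ * x ^ n₁) r₁
      rw [hu1]
      linarith only [h, hc]
    have key2 : 3 / 4 * c₄ ^ 2 * Q ^ 2 - 3 * r₂ ^ 2 ≤ (u₂ x y) ^ 2 := by
      have hc : (-(c₄ * y ^ n₄)) ^ 2 = c₄ ^ 2 * Q ^ 2 := by rw [← hYQ]; ring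
      have h := quad_lb (-(c₄ * y ^ n₄)) r₂
      rw [hu2]
      linarith only [h, hc]
    -- smallness of the errors
    have hKe : 48 * K ^ 2 * ε ^ 2 ≤ m := by
      have h48 : (0:ℝ) < 48 * K ^ 2 := by positivity
      have hε' : ε * (48 * K ^ 2) ≤ m := (le_div_iff₀ h48).mp hεm
      calc 48 * K ^ 2 * ε ^ 2 = (ε * (48 * K ^ 2)) * ε := by ring
        _ ≤ m * 1 := mul_le_mul hε' hε1 hε0.le hm0.le
        _ = m := mul_one m
    have h3s : 3 * (r₁ ^ 2 + r₂ ^ 2) ≤ m / 4 * (P ^ 2 + Q ^ 2) := by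
      refine err_bound ((K * ε) ^ 2) m P Q r₁ r₂ (sq_nonneg _) ?_ ?_ ?_ (by positivity)
      · calc r₁ ^ 2 ≤ (K * ε * (P + Q)) ^ 2 := hr1sq
          _ = (K * ε) ^ 2 * (P + Q) ^ 2 := by ring
      · calc r₂ ^ 2 ≤ (K * ε * (P + Q)) ^ 2 := hr2sq
          _ = (K * ε) ^ 2 * (P + Q) ^ 2 := by ring
      · calc 48 * (K * ε) ^ 2 = 48 * K ^ 2 * ε ^ 2 := by ring
          _ ≤ m := hKe
    rw [hXP, hYQ]
    exact final_comb (c₁ ^ 2) (c₄ ^ 2) (P ^ 2) (Q ^ 2) m r₁ r₂ _ _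
      key1 key2 h3s hm1 hm2 (sq_nonneg P) (sq_nonneg Q)
  refine ⟨ε, hε0, main, ?_⟩
  intro x y hx hy hxy
  have h := main x y hx hy
  have hpos : 0 < c₁ ^ 2 / 2 * x ^ (2 * n₁) + c₄ ^ 2 / 2 * y ^ (2 * n₄) := by
    have hx2 : 0 ≤ x ^ (2 * n₁) := by rw [pow_mul]; positivity
    have hy2 : 0 ≤ y ^ (2 * n₄) := by rw [pow_mul]; positivity
    rcases hxy with hx0 | hy0
    · have hne : x ^ (2 * n₁) ≠ 0 := pow_ne_zero _ hx0
      have : 0 < x ^ (2 * n₁) := lt_of_le_of_ne hx2 (Ne.symm hne)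
      have hc : 0 < c₁ ^ 2 / 2 * x ^ (2 * n₁) := mul_pos (by positivity) this
      have hc' : 0 ≤ c₄ ^ 2 / 2 * y ^ (2 * n₄) := mul_nonneg (by positivity) hy2
      linarith only [hc, hc']
    · have hne : y ^ (2 * n₄) ≠ 0 := pow_ne_zero _ hy0
      have : 0 < y ^ (2 * n₄) := lt_of_le_of_ne hy2 (Ne.symm hne)
      have hc : 0 < c₄ ^ 2 / 2 * y ^ (2 * n₄) := mul_pos (by positivity) this
      have hc' : 0 ≤ c₁ ^ 2 / 2 * x ^ (2 * n₁) := mul_nonneg (by positivity) hx2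
      linarith only [hc, hc']
  linarith
end

section
/- Let H = −Δ + λ²(x^m ± y^n)² be the Schrödinger form on ℝ², with m, n positive integers and λ > 0. Assume the one-dimensional bound: there is c₀ > 0 with ∫_ℝ |∂_v g|² + μ²(1 ± v^n)²|g|² dv ≥ c₀ μ ∫_ℝ |g|² dv for all μ > 0 and g ∈ C_c^∞(ℝ). Then there exists c > 0 such that for every f ∈ C_c^∞(ℝ²), ∫_{ℝ²} |∇f|² + λ²(x^m ± y^n)²|f|² dx dy ≥ c λ^{2n/(2n+nm−m)} ∫_{ℝ²} |f|² dx dy. -/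
open MeasureTheory Set



lemma slice_cs {f : ℝ × ℝ → ℝ} (hfs : HasCompactSupport f) (x : ℝ) :
    HasCompactSupport (fun y => f (x, y)) := by
  apply HasCompactSupport.intro (hfs.image continuous_snd)
  intro y hy
  by_contra hfy
  exact hy ⟨(x, y), subset_tsupport _ (Function.mem_support.mpr hfy), rfl⟩

lemma slice_cs' {f : ℝ × ℝ → ℝ} (hfs : HasCompactSupport f) (y : ℝ) :
    HasCompactSupport (fun x => f (x, y)) := by
  apply HasCompactSupport.intro (hfs.image continuous_fst)
  intro x hx
  by_contra hfy
  exact hx ⟨(x, y), subset_tsupport _ (Function.mem_support.mpr hfy), rfl⟩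

lemma cs_of_factor {α : Type*} [TopologicalSpace α] [T2Space α] {f : α → ℝ}
    (hfs : HasCompactSupport f) (φ : α → ℝ) :
    HasCompactSupport (fun p => φ p * f p ^ 2) := by
  apply HasCompactSupport.intro hfs
  intro p hp
  rw [image_eq_zero_of_notMem_tsupport hp]
  ring

lemma cs_sq {α : Type*} [TopologicalSpace α] [T2Space α] {f : α → ℝ}
    (hfs : HasCompactSupport f) : HasCompactSupport (fun p => f p ^ 2) := by
  apply HasCompactSupport.intro hfs
  intro p hp
  rw [image_eq_zero_of_notMem_tsupport hp]
  ring

lemma prod_integral_mono {F G : ℝ × ℝ → ℝ} (hF : Integrable F) (hG : Integrable G)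
    (h : ∀ x : ℝ, x ≠ 0 → (∫ y : ℝ, F (x, y)) ≤ ∫ y : ℝ, G (x, y)) :
    ∫ p : ℝ × ℝ, F p ≤ ∫ p : ℝ × ℝ, G p := by
  rw [Measure.volume_eq_prod] at hF hG ⊢
  rw [integral_prod F hF, integral_prod G hG]
  apply integral_mono_ae hF.integral_prod_left hG.integral_prod_left
  have h0 : ∀ᵐ (x : ℝ) ∂volume, x ≠ 0 := by
    rw [Filter.eventually_iff, mem_ae_iff]
    have : {x : ℝ | x ≠ 0}ᶜ = {0} := by ext x; simp
    rw [this]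
    exact measure_singleton 0
  filter_upwards [h0] with x hx using h x hx


lemma ftc_bound {g : ℝ → ℝ} (hg : ContDiff ℝ (⊤ : ℕ∞) g) (hgs : HasCompactSupport g)
    {ε : ℝ} (hε : 0 < ε) (x : ℝ) :
    g x ^ 2 ≤ ∫ t : ℝ, (ε * (deriv g t) ^ 2 + ε⁻¹ * (g t) ^ 2) := by
  have hgc : Continuous g := hg.continuous
  have hg' : Continuous (deriv g) := hg.continuous_deriv (by simp)
  have hgd : Differentiable ℝ g := hg.differentiable (by simp)
  have hsq : ContDiff ℝ 1 (fun t => g t ^ 2) := (hg.pow 2).of_le (by simp)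
  have hsq_cs : HasCompactSupport (fun t => g t ^ 2) := by
    apply HasCompactSupport.comp_left hgs (g := fun u : ℝ => u ^ 2)
    simp
  have hde : ∀ t, deriv (fun t => g t ^ 2) t = 2 * g t * deriv g t := by
    intro t
    have := ((hgd t).hasDerivAt.fun_pow 2).deriv
    simpa [mul_comm] using this
  have hQint : Integrable (fun t => ε * (deriv g t) ^ 2 + ε⁻¹ * (g t) ^ 2) := by
    apply Integrable.add
    · exact ((continuous_const.mul (hg'.pow 2)).integrable_of_hasCompactSupport
        (cs_of_factor hgs.deriv (fun _ => ε)))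
    · exact ((continuous_const.mul (hgc.pow 2)).integrable_of_hasCompactSupport
        (cs_of_factor hgs (fun _ => ε⁻¹)))
  have hQnn : ∀ t, 0 ≤ ε * (deriv g t) ^ 2 + ε⁻¹ * (g t) ^ 2 := by
    intro t
    have := sq_nonneg (deriv g t); have := sq_nonneg (g t)
    positivity
  calc g x ^ 2 = ∫ t in Iic x, deriv (fun t => g t ^ 2) t :=
        (hsq_cs.integral_Iic_deriv_eq hsq x).symm
    _ ≤ ∫ t in Iic x, (ε * (deriv g t) ^ 2 + ε⁻¹ * (g t) ^ 2) := by
        apply setIntegral_mono_on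
        · refine Integrable.integrableOn ?_
          have : Continuous (fun t => deriv (fun t => g t ^ 2) t) := by
            simp only [hde]
            fun_prop
          apply this.integrable_of_hasCompactSupport
          exact hsq_cs.deriv
        · exact hQint.integrableOn
        · exact measurableSet_Iic
        · intro t _
          rw [hde]
          have h := sq_nonneg (ε * deriv g t - g t)
          have h2 : ε * ε⁻¹ = 1 := mul_inv_cancel₀ hε.ne'
          nlinarith [hε, sq_nonneg (deriv g t), sq_nonneg (g t)]
    _ ≤ ∫ t : ℝ, (ε * (deriv g t) ^ 2 + ε⁻¹ * (g t) ^ 2) :=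
        setIntegral_le_integral hQint (Filter.Eventually.of_forall hQnn)

lemma key_y (n m : ℕ) (hn : 1 ≤ n) (hm : 1 ≤ m) (s : ℝ) (hs : s = 1 ∨ s = -1)
    (c₀ : ℝ)
    (h1d : ∀ s' : ℝ, s' = 1 ∨ s' = -1 → ∀ μ : ℝ, 0 < μ → ∀ g : ℝ → ℝ,
      ContDiff ℝ (⊤ : ℕ∞) g → HasCompactSupport g →
      c₀ * μ * ∫ v : ℝ, (g v) ^ 2
        ≤ ∫ v : ℝ, ((deriv g v) ^ 2 + μ ^ 2 * (1 + s' * v ^ n) ^ 2 * (g v) ^ 2))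
    (lam : ℝ) (hlam : 0 < lam) (f : ℝ × ℝ → ℝ)
    (hf : ContDiff ℝ (⊤ : ℕ∞) f) (hfs : HasCompactSupport f) (x : ℝ) (hx : x ≠ 0) :
    c₀ * lam * |x| ^ ((m : ℝ) - (m : ℝ) / (n : ℝ)) * ∫ y : ℝ, f (x, y) ^ 2
      ≤ ∫ y : ℝ, ((deriv (fun t => f (x, t)) y) ^ 2
          + lam ^ 2 * (x ^ m + s * y ^ n) ^ 2 * f (x, y) ^ 2) := by
  have habs : (0:ℝ) < |x| := abs_pos.mpr hx
  have hn0 : (n:ℝ) ≠ 0 := by positivity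
  set r : ℝ := |x| ^ ((m : ℝ) / (n : ℝ)) with hr
  have hrpos : 0 < r := Real.rpow_pos_of_pos habs _
  have hrn : r ^ n = |x| ^ m := by
    rw [hr, ← Real.rpow_natCast (|x| ^ ((m:ℝ)/(n:ℝ))) n, ← Real.rpow_mul habs.le,
      div_mul_cancel₀ _ hn0, Real.rpow_natCast]
  set e : ℝ := if 0 ≤ x ^ m then 1 else -1 with he
  have habsm : (0:ℝ) < |x| ^ m := pow_pos habs m
  have he2 : e * |x| ^ m = x ^ m := by
    rw [he, ← abs_pow]
    split_ifs with h
    · rw [one_mul, abs_of_nonneg h]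
    · rw [abs_of_neg (lt_of_not_ge h)]; ring
  have hee : e = 1 ∨ e = -1 := by
    rw [he]; split_ifs with h
    · exact Or.inl rfl
    · exact Or.inr rfl
  have hesq : e ^ 2 = 1 := by rcases hee with h | h <;> rw [h] <;> norm_num
  set s' : ℝ := e * s with hs'def
  have hs' : s' = 1 ∨ s' = -1 := by
    rcases hee with h | h <;> rcases hs with h2 | h2 <;> simp [hs'def, h, h2]
  set μ : ℝ := lam * |x| ^ m * r with hμdef
  have hμ : 0 < μ := by positivity
  set g : ℝ → ℝ := fun v => f (x, r * v) with hg
  have hgc : ContDiff ℝ (⊤ : ℕ∞) g :=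
    hf.comp (contDiff_const.prodMk (contDiff_const.mul contDiff_id))
  have hgs : HasCompactSupport g := by
    simpa [smul_eq_mul] using (slice_cs hfs x).comp_smul hrpos.ne'
  have key := h1d s' hs' μ hμ g hgc hgs
  set D : ℝ → ℝ := fun y => deriv (fun t => f (x, t)) y with hDdef
  have hD : ∀ v, deriv g v = r * D (r * v) := by
    intro v
    have hdiff : DifferentiableAt ℝ (fun y => f (x, y)) (r * v) :=
      ((hf.comp (contDiff_const.prodMk contDiff_id)).differentiable (by simp)) (r * v)
    have h1 : HasDerivAt (fun w : ℝ => r * w) r v := by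
      simpa using (hasDerivAt_id v).const_mul r
    have h2 : HasDerivAt (fun y => f (x, y)) (D (r * v)) (r * v) := by
      simp only [hDdef]
      exact hdiff.hasDerivAt
    have h3 := HasDerivAt.comp v h2 h1
    rw [hg]
    have h4 := h3.deriv
    simp only [Function.comp_def] at h4
    rw [h4]; ring
  set W : ℝ → ℝ := fun y => (D y) ^ 2 + lam ^ 2 * (x ^ m + s * y ^ n) ^ 2 * f (x, y) ^ 2
    with hWdef
  have hint : ∀ v : ℝ, (deriv g v) ^ 2 + μ ^ 2 * (1 + s' * v ^ n) ^ 2 * (g v) ^ 2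
      = r ^ 2 * W (r * v) := by
    intro v
    have hsub : x ^ m + s * (r * v) ^ n = |x| ^ m * (e + s * v ^ n) := by
      rw [mul_pow, hrn, ← he2]; ring
    have hsq2 : (e + s * v ^ n) ^ 2 = (1 + s' * v ^ n) ^ 2 := by
      have h4 : e + s * v ^ n = e * (1 + s' * v ^ n) := by
        rw [hs'def, show e * (1 + e * s * v ^ n) = e + e ^ 2 * (s * v ^ n) from by ring,
          hesq]; ring
      rw [h4, mul_pow, hesq, one_mul]
    rw [hD v]
    simp only [hWdef, hg]
    rw [hsub, ← hsq2, hμdef]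
    ring
  have hcv1 : (∫ v : ℝ, (g v) ^ 2) = |r⁻¹| * ∫ y : ℝ, f (x, y) ^ 2 := by
    have h5 := Measure.integral_comp_mul_left (fun y => f (x, y) ^ 2) r
    simpa [hg, smul_eq_mul] using h5
  have hcv2 : (∫ v : ℝ, ((deriv g v) ^ 2 + μ ^ 2 * (1 + s' * v ^ n) ^ 2 * (g v) ^ 2))
      = r * ∫ y : ℝ, W y := by
    simp only [hint]
    rw [integral_const_mul, Measure.integral_comp_mul_left W r, smul_eq_mul,
      abs_of_pos (inv_pos.mpr hrpos)]
    field_simp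
  rw [hcv1, hcv2, abs_of_pos (inv_pos.mpr hrpos)] at key
  have hxa : |x| ^ ((m : ℝ) - (m : ℝ) / (n : ℝ)) = |x| ^ m * r⁻¹ := by
    have h6 : r⁻¹ = |x| ^ (-((m:ℝ)/(n:ℝ))) := by
      rw [hr, ← Real.rpow_neg habs.le]
    rw [h6, ← Real.rpow_natCast |x| m, ← Real.rpow_add habs]
    ring_nf
  have hfin : c₀ * lam * (|x| ^ m * r⁻¹) * ∫ y : ℝ, f (x, y) ^ 2
      = c₀ * μ * (r⁻¹ * ∫ y : ℝ, f (x, y) ^ 2) * r⁻¹ := by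
    rw [hμdef]; field_simp
  rw [hxa, hfin]
  have h7 := mul_le_mul_of_nonneg_right key (inv_nonneg.mpr hrpos.le)
  refine h7.trans_eq ?_
  rw [mul_comm (r * ∫ y : ℝ, W y) r⁻¹, ← mul_assoc, inv_mul_cancel₀ hrpos.ne', one_mul]

/-- Assuming the one-dimensional bound
`∫ |g'|² + μ²(1 ± v^n)²|g|² ≥ c₀ μ ∫ |g|²` (for both signs, all `μ > 0` and all
`g ∈ C_c^∞(ℝ)`), the two-dimensional Schrödinger form `−Δ + λ²(x^m ± y^n)²` satisfies
`∫ |∇f|² + λ²(x^m ± y^n)²|f|² ≥ c λ^{2n/(2n+nm−m)} ∫ |f|²` for all `f ∈ C_c^∞(ℝ²)`,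
for some `c > 0`. The sign `±` is encoded by `s ∈ {1, −1}`. -/
theorem stmt15 (n m : ℕ) (hn : 1 ≤ n) (hm : 1 ≤ m) (s : ℝ) (hs : s = 1 ∨ s = -1)
    (c₀ : ℝ) (hc₀ : 0 < c₀)
    (h1d : ∀ s' : ℝ, s' = 1 ∨ s' = -1 → ∀ μ : ℝ, 0 < μ → ∀ g : ℝ → ℝ,
      ContDiff ℝ (⊤ : ℕ∞) g → HasCompactSupport g →
      c₀ * μ * ∫ v : ℝ, (g v) ^ 2
        ≤ ∫ v : ℝ, ((deriv g v) ^ 2 + μ ^ 2 * (1 + s' * v ^ n) ^ 2 * (g v) ^ 2)) :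
    ∃ c : ℝ, 0 < c ∧ ∀ lam : ℝ, 0 < lam → ∀ f : ℝ × ℝ → ℝ,
      ContDiff ℝ (⊤ : ℕ∞) f → HasCompactSupport f →
      c * lam ^ ((2 * n : ℝ) / (2 * n + n * m - m)) * ∫ p : ℝ × ℝ, (f p) ^ 2
        ≤ ∫ p : ℝ × ℝ,
            ((deriv (fun t => f (t, p.2)) p.1) ^ 2 + (deriv (fun t => f (p.1, t)) p.2) ^ 2
              + lam ^ 2 * (p.1 ^ m + s * p.2 ^ n) ^ 2 * (f p) ^ 2) := by
  have hnR : (1:ℝ) ≤ (n:ℝ) := by exact_mod_cast hn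
  have hmR : (0:ℝ) ≤ (m:ℝ) := Nat.cast_nonneg m
  set a : ℝ := (m : ℝ) - (m : ℝ) / (n : ℝ) with hadef
  have ha : 0 ≤ a := by
    have := div_le_self hmR hnR
    rw [hadef]; linarith
  have ha2 : (0:ℝ) < a + 2 := by linarith
  have hβeq : ((2 * n : ℝ) / (2 * n + n * m - m)) = 2 / (a + 2) := by
    have hn0 : (n:ℝ) ≠ 0 := by linarith
    have hD : (0:ℝ) < 2 * n + n * m - m := by nlinarith
    rw [div_eq_div_iff hD.ne' ha2.ne', hadef]
    field_simp
    ring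
  refine ⟨c₀ ^ ((2 * n : ℝ) / (2 * n + n * m - m)) / 16, by positivity, ?_⟩
  intro lam hlam f hf hfs
  have hfc : Continuous f := hf.continuous
  have hfd : Differentiable ℝ f := hf.differentiable (by simp)
  -- partial derivatives as continuous functions
  have hDx_eq : ∀ p : ℝ × ℝ, deriv (fun t => f (t, p.2)) p.1 = fderiv ℝ f p (1, 0) := by
    intro p
    have h1 : HasDerivAt (fun t : ℝ => (t, p.2)) ((1:ℝ), (0:ℝ)) p.1 :=
      (hasDerivAt_id p.1).prodMk (hasDerivAt_const p.1 p.2)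
    have h2 : HasFDerivAt f (fderiv ℝ f p) ((fun t : ℝ => (t, p.2)) p.1) :=
      (hfd p).hasFDerivAt
    have h3 := (h2.comp_hasDerivAt p.1 h1).deriv
    simp only [Function.comp_def] at h3
    exact h3
  have hDy_eq : ∀ p : ℝ × ℝ, deriv (fun t => f (p.1, t)) p.2 = fderiv ℝ f p (0, 1) := by
    intro p
    have h1 : HasDerivAt (fun t : ℝ => (p.1, t)) ((0:ℝ), (1:ℝ)) p.2 :=
      (hasDerivAt_const p.2 p.1).prodMk (hasDerivAt_id p.2)
    have h2 : HasFDerivAt f (fderiv ℝ f p) ((fun t : ℝ => (p.1, t)) p.2) :=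
      (hfd p).hasFDerivAt
    have h3 := (h2.comp_hasDerivAt p.2 h1).deriv
    simp only [Function.comp_def] at h3
    exact h3
  have hcDx : Continuous fun p : ℝ × ℝ => fderiv ℝ f p (1, 0) :=
    (hf.continuous_fderiv (by simp)).clm_apply continuous_const
  have hcDy : Continuous fun p : ℝ × ℝ => fderiv ℝ f p (0, 1) :=
    (hf.continuous_fderiv (by simp)).clm_apply continuous_const
  have hcsDx : HasCompactSupport fun p : ℝ × ℝ => fderiv ℝ f p (1, 0) :=
    hfs.fderiv_apply ℝ (1, 0)
  have hcsDy : HasCompactSupport fun p : ℝ × ℝ => fderiv ℝ f p (0, 1) :=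
    hfs.fderiv_apply ℝ (0, 1)
  -- integrability of all the pieces
  have iFsq : Integrable (fun p : ℝ × ℝ => f p ^ 2) :=
    (hfc.pow 2).integrable_of_hasCompactSupport (cs_sq hfs)
  have iGx : Integrable (fun p : ℝ × ℝ => (deriv (fun t => f (t, p.2)) p.1) ^ 2) := by
    simp only [hDx_eq]
    exact (hcDx.pow 2).integrable_of_hasCompactSupport (cs_sq hcsDx)
  have iGy : Integrable (fun p : ℝ × ℝ => (deriv (fun t => f (p.1, t)) p.2) ^ 2) := by
    simp only [hDy_eq]
    exact (hcDy.pow 2).integrable_of_hasCompactSupport (cs_sq hcsDy)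
  have hcPot : Continuous fun p : ℝ × ℝ => lam ^ 2 * (p.1 ^ m + s * p.2 ^ n) ^ 2 := by
    fun_prop
  have iPot : Integrable (fun p : ℝ × ℝ =>
      lam ^ 2 * (p.1 ^ m + s * p.2 ^ n) ^ 2 * f p ^ 2) := by
    have hco : Continuous fun p : ℝ × ℝ =>
        lam ^ 2 * (p.1 ^ m + s * p.2 ^ n) ^ 2 * f p ^ 2 := by fun_prop
    exact hco.integrable_of_hasCompactSupport (cs_of_factor hfs _)
  have hcw : Continuous fun p : ℝ × ℝ => |p.1| ^ a := by
    apply Continuous.rpow_const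
    · exact continuous_abs.comp continuous_fst
    · exact fun _ => Or.inr ha
  have iPw : Integrable (fun p : ℝ × ℝ => |p.1| ^ a * f p ^ 2) :=
    (hcw.mul (hfc.pow 2)).integrable_of_hasCompactSupport (cs_of_factor hfs _)
  -- abbreviations
  set T : ℝ := ∫ p : ℝ × ℝ, (deriv (fun t => f (t, p.2)) p.1) ^ 2 with hTdef
  set Qy : ℝ := ∫ p : ℝ × ℝ, ((deriv (fun t => f (p.1, t)) p.2) ^ 2
      + lam ^ 2 * (p.1 ^ m + s * p.2 ^ n) ^ 2 * f p ^ 2) with hQydef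
  set N : ℝ := ∫ p : ℝ × ℝ, f p ^ 2 with hNdef
  set P : ℝ := ∫ p : ℝ × ℝ, |p.1| ^ a * f p ^ 2 with hPdef
  have hT0 : 0 ≤ T := integral_nonneg fun p => sq_nonneg _
  have hQy0 : 0 ≤ Qy := integral_nonneg fun p => by positivity
  have hN0 : 0 ≤ N := integral_nonneg fun p => sq_nonneg _
  have hP0 : 0 ≤ P := integral_nonneg fun p => by positivity
  -- Step A : c₀ * lam * P ≤ Qy
  have stepA : c₀ * lam * P ≤ Qy := by
    rw [hPdef, ← integral_const_mul, hQydef]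
    apply prod_integral_mono ((iPw.const_mul (c₀ * lam))) (iGy.add iPot)
    intro x hx
    have h := key_y n m hn hm s hs c₀ h1d lam hlam f hf hfs x hx
    have hl : (∫ y : ℝ, c₀ * lam * (|x| ^ a * f (x, y) ^ 2))
        = c₀ * lam * |x| ^ a * ∫ y : ℝ, f (x, y) ^ 2 := by
      rw [← integral_const_mul]
      congr 1
      funext y
      ring
    rw [hl, hadef]
    exact h
  -- Step B : the x-direction bound
  set A : ℝ := c₀ * lam with hAdef
  have hA : 0 < A := by rw [hAdef]; positivity
  set R : ℝ := A ^ (-(1 / (a + 2))) with hRdef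
  have hR : 0 < R := Real.rpow_pos_of_pos hA _
  set ε : ℝ := 4 * R with hεdef
  have hε : 0 < ε := by rw [hεdef]; linarith
  -- the inner-integral function
  set G : ℝ × ℝ → ℝ := fun p =>
    ε * (deriv (fun t => f (t, p.2)) p.1) ^ 2 + ε⁻¹ * f p ^ 2 with hGdef
  have iG : Integrable G := by
    rw [hGdef]
    exact (iGx.const_mul ε).add (iFsq.const_mul ε⁻¹)
  have iGprod : Integrable G ((volume : Measure ℝ).prod volume) := by
    rw [← Measure.volume_eq_prod]; exact iG
  set B : ℝ → ℝ := fun y => ∫ x : ℝ, G (x, y) with hBdef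
  have iB : Integrable B := by
    rw [hBdef]; exact iGprod.integral_prod_right
  -- pointwise bound
  have hpt : ∀ p : ℝ × ℝ, f p ^ 2 ≤
      (Icc (-R) R).indicator (fun _ => (1:ℝ)) p.1 * B p.2
        + R ^ (-a) * (|p.1| ^ a * f p ^ 2) := by
    intro p
    have hRa : (0:ℝ) < R ^ (-a) := Real.rpow_pos_of_pos hR _
    rcases le_or_gt |p.1| R with hcase | hcase
    · have hmem : p.1 ∈ Icc (-R) R := abs_le.mp hcase
      rw [indicator_of_mem hmem, one_mul]
      have hslice : f p ^ 2 ≤ B p.2 := by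
        have hgc : ContDiff ℝ (⊤ : ℕ∞) (fun x => f (x, p.2)) :=
          hf.comp (contDiff_id.prodMk contDiff_const)
        have := ftc_bound hgc (slice_cs' hfs p.2) hε p.1
        rw [hBdef]
        simpa [hGdef] using this
      have : 0 ≤ R ^ (-a) * (|p.1| ^ a * f p ^ 2) := by positivity
      linarith
    · have hmem : p.1 ∉ Icc (-R) R := by
        rw [mem_Icc, ← abs_le]; exact not_le.mpr hcase
      rw [indicator_of_notMem hmem, zero_mul, zero_add]
      have h1 : R ^ a ≤ |p.1| ^ a := Real.rpow_le_rpow hR.le hcase.le ha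
      have h2 : R ^ (-a) * R ^ a = 1 := by
        rw [← Real.rpow_add hR]; simp
      have h3 : (1:ℝ) ≤ R ^ (-a) * |p.1| ^ a := by
        calc (1:ℝ) = R ^ (-a) * R ^ a := h2.symm
          _ ≤ R ^ (-a) * |p.1| ^ a := by
              apply mul_le_mul_of_nonneg_left h1 hRa.le
      nlinarith [sq_nonneg (f p)]
  -- integrate the pointwise bound
  have iInd : Integrable (fun x : ℝ => (Icc (-R) R).indicator (fun _ => (1:ℝ)) x) := by
    rw [integrable_indicator_iff measurableSet_Icc]
    apply (integrableOn_const_iff (C := (1:ℝ))).mpr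
    right
    rw [Real.volume_Icc]
    exact ENNReal.ofReal_lt_top
  have iIndB : Integrable (fun p : ℝ × ℝ =>
      (Icc (-R) R).indicator (fun _ => (1:ℝ)) p.1 * B p.2) := by
    rw [Measure.volume_eq_prod]
    exact iInd.mul_prod iB
  have hNbound : N ≤ 2 * R * (∫ y : ℝ, B y) + R ^ (-a) * P := by
    have h1 : N ≤ ∫ p : ℝ × ℝ, ((Icc (-R) R).indicator (fun _ => (1:ℝ)) p.1 * B p.2
        + R ^ (-a) * (|p.1| ^ a * f p ^ 2)) := by
      rw [hNdef]
      exact integral_mono iFsq (iIndB.add (iPw.const_mul _)) hpt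
    have h2 : (∫ p : ℝ × ℝ, ((Icc (-R) R).indicator (fun _ => (1:ℝ)) p.1 * B p.2
        + R ^ (-a) * (|p.1| ^ a * f p ^ 2)))
        = (∫ p : ℝ × ℝ, (Icc (-R) R).indicator (fun _ => (1:ℝ)) p.1 * B p.2)
          + R ^ (-a) * P := by
      rw [integral_add iIndB (iPw.const_mul _), integral_const_mul, hPdef]
    have h3 : (∫ p : ℝ × ℝ, (Icc (-R) R).indicator (fun _ => (1:ℝ)) p.1 * B p.2)
        = 2 * R * ∫ y : ℝ, B y := by
      rw [Measure.volume_eq_prod, integral_prod_mul]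
      have : (∫ x : ℝ, (Icc (-R) R).indicator (fun _ => (1:ℝ)) x) = 2 * R := by
        rw [integral_indicator_const _ measurableSet_Icc, Real.volume_real_Icc_of_le (by linarith), smul_eq_mul,
          mul_one]
        ring
      rw [this]
    linarith [h1, h2 ▸ h1, h3]
  -- evaluate ∫ B
  have hBval : (∫ y : ℝ, B y) = ε * T + ε⁻¹ * N := by
    have h1 : (∫ y : ℝ, B y) = ∫ p : ℝ × ℝ, G p := by
      rw [hBdef]
      have hsw := integral_integral_swap (f := fun x y => G (x, y))
        (μ := (volume : Measure ℝ)) (ν := (volume : Measure ℝ)) iGprod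
      rw [← hsw, Measure.volume_eq_prod, integral_prod G iGprod]
    rw [h1, hGdef, integral_add (iGx.const_mul ε) (iFsq.const_mul ε⁻¹),
      integral_const_mul, integral_const_mul, hTdef, hNdef]
  -- combine
  have hmain : N ≤ 16 * R ^ (2:ℕ) * T + 2 * R ^ (-a) * P := by
    have h4 : 2 * R * (ε * T + ε⁻¹ * N) = 8 * R ^ (2:ℕ) * T + (1/2) * N := by
      rw [hεdef]
      field_simp
      ring
    have := hNbound
    rw [hBval, h4] at this
    linarith
  -- rpow algebra
  have hKR2 : A ^ (2 / (a + 2)) * R ^ (2:ℕ) = 1 := by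
    rw [hRdef, ← Real.rpow_natCast (A ^ (-(1 / (a + 2)))) 2, ← Real.rpow_mul hA.le,
      ← Real.rpow_add hA]
    rw [show 2 / (a + 2) + -(1 / (a + 2)) * (2:ℕ) = 0 by push_cast; field_simp; ring]
    exact Real.rpow_zero A
  have hKRa : A ^ (2 / (a + 2)) * R ^ (-a) = A := by
    rw [hRdef, ← Real.rpow_mul hA.le, ← Real.rpow_add hA]
    rw [show 2 / (a + 2) + -(1 / (a + 2)) * -a = 1 by field_simp; ring]
    exact Real.rpow_one A
  set K : ℝ := A ^ (2 / (a + 2)) with hKdef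
  have hK : 0 < K := Real.rpow_pos_of_pos hA _
  have hfinal : K * N ≤ 16 * T + 2 * A * P := by
    have := mul_le_mul_of_nonneg_left hmain hK.le
    calc K * N ≤ K * (16 * R ^ (2:ℕ) * T + 2 * R ^ (-a) * P) := this
      _ = 16 * (K * R ^ (2:ℕ)) * T + 2 * (K * R ^ (-a)) * P := by ring
      _ = 16 * T + 2 * A * P := by rw [hKdef, hKR2, hKRa]; ring
  -- conclude
  have hAP : A * P ≤ Qy := by rw [hAdef]; exact stepA
  have hsplit : (∫ p : ℝ × ℝ,
      ((deriv (fun t => f (t, p.2)) p.1) ^ 2 + (deriv (fun t => f (p.1, t)) p.2) ^ 2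
        + lam ^ 2 * (p.1 ^ m + s * p.2 ^ n) ^ 2 * (f p) ^ 2)) = T + Qy := by
    have hiQ : Integrable (fun p : ℝ × ℝ => (deriv (fun t => f (p.1, t)) p.2) ^ 2
        + lam ^ 2 * (p.1 ^ m + s * p.2 ^ n) ^ 2 * f p ^ 2) := iGy.add iPot
    rw [hTdef, hQydef, ← integral_add iGx hiQ]
    congr 1
    funext p
    ring
  rw [hsplit]
  have hcK : c₀ ^ ((2 * n : ℝ) / (2 * n + n * m - m)) / 16
      * lam ^ ((2 * n : ℝ) / (2 * n + n * m - m)) = K / 16 := by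
    rw [hKdef, hAdef, hβeq, Real.mul_rpow hc₀.le hlam.le]
    ring
  rw [hcK]
  -- K/16 * N ≤ T + Qy
  have : K * N ≤ 16 * (T + Qy) := by linarith
  linarith
end
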